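/- arXiv:1704.00886 — 4 statements merged into one kernel-verified Lean document; each statement's English description precedes it below -/
import Mathlib

section
/- Let g ∈ C¹(ℝ) be concave. Then for all real symmetric d×d matrices φ, ψ: (φ − ψ) : g'(ψ) ≥ tr(g(φ) − g(ψ)) ≥ (φ − ψ) : g'(φ), where g and g' are applied to symmetric matrices via the spectral decomposition and A : B = tr(AᵀB). -/
open Matrix BigOperators

/-- Apply a scalar function spectrally: given an orthogonal `O` and eigenvalues `lam`,
the matrix `Oᵀ * diagonal (g ∘ lam) * O`. -/
noncomputable def spec {d : ℕ} (O : Matrix (Fin d) (Fin d) ℝ) (lam : Fin d → ℝ)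
    (g : ℝ → ℝ) : Matrix (Fin d) (Fin d) ℝ :=
  Oᵀ * Matrix.diagonal (fun i => g (lam i)) * O

/-- The matrix inner product `A : B = ∑ᵢⱼ Aᵢⱼ Bᵢⱼ`. -/
def minner {d : ℕ} (A B : Matrix (Fin d) (Fin d) ℝ) : ℝ :=
  ∑ i, ∑ j, A i j * B i j

/-- The squared Frobenius norm. -/
def frobSq {d : ℕ} (A : Matrix (Fin d) (Fin d) ℝ) : ℝ :=
  ∑ i, ∑ j, (A i j) ^ 2

/-- The regularized logarithm `G_δ`. -/
noncomputable def Gdelta (δ s : ℝ) : ℝ :=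
  if δ ≤ s then Real.log s else s / δ + Real.log δ - 1

/-- The derivative of the regularized logarithm: `G_δ'(s) = 1 / max s δ`. -/
noncomputable def Gdelta' (δ s : ℝ) : ℝ := (max s δ)⁻¹

/-- `β_δ(s) = max s δ`. -/
def betadelta (δ s : ℝ) : ℝ := max s δ

/-- `β_δ^b(s) = min (max s δ) b`. -/
def betadeltab (δ b s : ℝ) : ℝ := min (max s δ) b

/-- The conjugate regularization `H_δ`. -/
noncomputable def Hdelta (δ s : ℝ) : ℝ :=
  if s ≤ δ⁻¹ then Real.log s else δ * s + Real.log δ⁻¹ - 1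

lemma tangent_le (g : ℝ → ℝ) (hg : Differentiable ℝ g) (hconc : ConcaveOn ℝ Set.univ g)
    (s t : ℝ) : g s ≤ g t + deriv g t * (s - t) := by
  rcases lt_trichotomy s t with h | rfl | h
  · have h1 := hconc.deriv_le_slope (Set.mem_univ s) (Set.mem_univ t) h (hg t)
    rw [slope_def_field, le_div_iff₀ (by linarith : (0:ℝ) < t - s)] at h1
    nlinarith
  · simp
  · have h1 := hconc.slope_le_deriv (Set.mem_univ t) (Set.mem_univ s) h (hg t)
    rw [slope_def_field, div_le_iff₀ (by linarith : (0:ℝ) < s - t)] at h1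
    nlinarith

lemma spec_apply {d : ℕ} (O : Matrix (Fin d) (Fin d) ℝ) (lam : Fin d → ℝ) (f : ℝ → ℝ)
    (a b : Fin d) : spec O lam f a b = ∑ i, O i a * f (lam i) * O i b := by
  simp [spec, Matrix.mul_apply, Matrix.diagonal_apply, ite_mul, mul_ite, Finset.sum_ite_eq,
    Finset.mem_univ]

lemma sum4_swap {α : Type*} [Fintype α] (F : α → α → α → α → ℝ) :
    ∑ a, ∑ b, ∑ i, ∑ j, F a b i j = ∑ i, ∑ j, ∑ a, ∑ b, F a b i j :=
  calc ∑ a, ∑ b, ∑ i, ∑ j, F a b i j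
      = ∑ a, ∑ i, ∑ b, ∑ j, F a b i j :=
        Finset.sum_congr rfl fun a _ => Finset.sum_comm
    _ = ∑ i, ∑ a, ∑ b, ∑ j, F a b i j := Finset.sum_comm
    _ = ∑ i, ∑ a, ∑ j, ∑ b, F a b i j :=
        Finset.sum_congr rfl fun i _ => Finset.sum_congr rfl fun a _ => Finset.sum_comm
    _ = ∑ i, ∑ j, ∑ a, ∑ b, F a b i j :=
        Finset.sum_congr rfl fun i _ => Finset.sum_comm

lemma minner_spec {d : ℕ} (O P : Matrix (Fin d) (Fin d) ℝ) (lam mu : Fin d → ℝ)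
    (f h : ℝ → ℝ) :
    minner (spec O lam f) (spec P mu h) =
      ∑ i, ∑ j, ((O * Pᵀ) i j)^2 * (f (lam i) * h (mu j)) := by
  simp only [minner, spec_apply, Finset.sum_mul_sum]
  rw [sum4_swap]
  refine Finset.sum_congr rfl fun i _ => Finset.sum_congr rfl fun j _ => ?_
  simp only [Matrix.mul_apply, Matrix.transpose_apply, sq, Finset.sum_mul_sum,
    Finset.sum_mul, Finset.mul_sum]
  refine Finset.sum_congr rfl fun a _ => Finset.sum_congr rfl fun b _ => by ring

lemma minner_spec_same {d : ℕ} (P : Matrix (Fin d) (Fin d) ℝ) (mu : Fin d → ℝ)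
    (f h : ℝ → ℝ) (hP : Pᵀ * P = 1) :
    minner (spec P mu f) (spec P mu h) = ∑ j, f (mu j) * h (mu j) := by
  rw [minner_spec, mul_eq_one_comm.mp hP]
  simp [Matrix.one_apply, sq, ite_mul, mul_ite]

lemma trace_spec {d : ℕ} (O : Matrix (Fin d) (Fin d) ℝ) (lam : Fin d → ℝ) (g : ℝ → ℝ)
    (hO : Oᵀ * O = 1) :
    Matrix.trace (spec O lam g) = ∑ i, g (lam i) := by
  rw [spec, Matrix.trace_mul_cycle, mul_eq_one_comm.mp hO, Matrix.one_mul, Matrix.trace_diagonal]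

lemma row_sums {d : ℕ} (O P : Matrix (Fin d) (Fin d) ℝ)
    (hO : Oᵀ * O = 1) (hP : Pᵀ * P = 1) (i : Fin d) :
    ∑ j, ((O * Pᵀ) i j)^2 = 1 := by
  have : ∑ j, ((O * Pᵀ) i j)^2 = ((O * Pᵀ) * (O * Pᵀ)ᵀ) i i := by
    simp [Matrix.mul_apply, sq, mul_comm]
  rw [this, Matrix.transpose_mul, Matrix.transpose_transpose, Matrix.mul_assoc,
    ← Matrix.mul_assoc Pᵀ, hP, Matrix.one_mul, mul_eq_one_comm.mp hO, Matrix.one_apply_eq]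

lemma col_sums {d : ℕ} (O P : Matrix (Fin d) (Fin d) ℝ)
    (hO : Oᵀ * O = 1) (hP : Pᵀ * P = 1) (j : Fin d) :
    ∑ i, ((O * Pᵀ) i j)^2 = 1 := by
  have : ∑ i, ((O * Pᵀ) i j)^2 = ((O * Pᵀ)ᵀ * (O * Pᵀ)) j j := by
    simp [Matrix.mul_apply, sq, mul_comm]
  rw [this, Matrix.transpose_mul, Matrix.transpose_transpose, Matrix.mul_assoc,
    ← Matrix.mul_assoc Oᵀ, hO, Matrix.one_mul, mul_eq_one_comm.mp hP, Matrix.one_apply_eq]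

lemma minner_sub_left {d : ℕ} (A B C : Matrix (Fin d) (Fin d) ℝ) :
    minner (A - B) C = minner A C - minner B C := by
  simp [minner, Matrix.sub_apply, sub_mul, Finset.sum_sub_distrib]

theorem statement1 (d : ℕ) (g : ℝ → ℝ) (hg : ContDiff ℝ 1 g)
    (hconc : ConcaveOn ℝ Set.univ g)
    (O P : Matrix (Fin d) (Fin d) ℝ) (lam mu : Fin d → ℝ)
    (hO : Oᵀ * O = 1) (hP : Pᵀ * P = 1) :
    minner (spec O lam id - spec P mu id) (spec P mu (deriv g)) ≥
      Matrix.trace (spec O lam g - spec P mu g) ∧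
    Matrix.trace (spec O lam g - spec P mu g) ≥
      minner (spec O lam id - spec P mu id) (spec O lam (deriv g)) := by
  have hdiff : Differentiable ℝ g := hg.differentiable one_ne_zero
  set c : Fin d → Fin d → ℝ := fun i j => ((O * Pᵀ) i j)^2 with hc
  have hcnn : ∀ i j, 0 ≤ c i j := fun i j => sq_nonneg _
  have hrow : ∀ i, ∑ j, c i j = 1 := row_sums O P hO hP
  have hcol : ∀ j, ∑ i, c i j = 1 := col_sums O P hO hP
  have htr : Matrix.trace (spec O lam g - spec P mu g)
      = ∑ i, g (lam i) - ∑ j, g (mu j) := by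
    rw [Matrix.trace_sub, trace_spec O lam g hO, trace_spec P mu g hP]
  -- rewrite single sums as double sums weighted by c
  have hglam : ∑ i, g (lam i) = ∑ i, ∑ j, c i j * g (lam i) := by
    refine Finset.sum_congr rfl fun i _ => ?_
    rw [← Finset.sum_mul, hrow i, one_mul]
  have hgmu : ∑ j, g (mu j) = ∑ i, ∑ j, c i j * g (mu j) := by
    rw [Finset.sum_comm]
    refine Finset.sum_congr rfl fun j _ => ?_
    rw [← Finset.sum_mul, hcol j, one_mul]
  have hmugmu : ∑ j, mu j * deriv g (mu j) = ∑ i, ∑ j, c i j * (mu j * deriv g (mu j)) := by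
    rw [Finset.sum_comm]
    refine Finset.sum_congr rfl fun j _ => ?_
    rw [← Finset.sum_mul, hcol j, one_mul]
  have hlamglam : ∑ i, lam i * deriv g (lam i)
      = ∑ i, ∑ j, c i j * (lam i * deriv g (lam i)) := by
    refine Finset.sum_congr rfl fun i _ => ?_
    rw [← Finset.sum_mul, hrow i, one_mul]
  constructor
  · -- first inequality
    rw [htr, minner_sub_left, minner_spec O P lam mu id (deriv g),
      minner_spec_same P mu id (deriv g) hP]
    simp only [id_eq]
    have key : ∀ i ∈ Finset.univ (α := Fin d), ∀ j ∈ Finset.univ (α := Fin d),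
        c i j * g (lam i) ≤ c i j * (lam i * deriv g (mu j) - mu j * deriv g (mu j) + g (mu j)) := by
      intro i _ j _
      refine mul_le_mul_of_nonneg_left ?_ (hcnn i j)
      have := tangent_le g hdiff hconc (lam i) (mu j)
      nlinarith
    have hsum := Finset.sum_le_sum fun i hi =>
      Finset.sum_le_sum (key i hi)
    have expand : ∑ i, ∑ j, c i j * (lam i * deriv g (mu j) - mu j * deriv g (mu j) + g (mu j))
        = ∑ i, ∑ j, c i j * (lam i * deriv g (mu j))
          - ∑ i, ∑ j, c i j * (mu j * deriv g (mu j))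
          + ∑ i, ∑ j, c i j * g (mu j) := by
      rw [← Finset.sum_sub_distrib, ← Finset.sum_add_distrib]
      refine Finset.sum_congr rfl fun i _ => ?_
      rw [← Finset.sum_sub_distrib, ← Finset.sum_add_distrib]
      exact Finset.sum_congr rfl fun j _ => by ring
    rw [expand, ← hglam, ← hmugmu, ← hgmu] at hsum
    simp only [hc] at hsum
    linarith
  · -- second inequality
    rw [htr, minner_sub_left, minner_spec O O lam lam id (deriv g),
      minner_spec P O mu lam id (deriv g)]
    have hOO : O * Oᵀ = 1 := mul_eq_one_comm.mp hO
    have h1 : ∑ i, ∑ j, ((O * Oᵀ) i j)^2 * (id (lam i) * deriv g (lam j))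
        = ∑ i, lam i * deriv g (lam i) := by
      rw [hOO]; simp [Matrix.one_apply, sq, ite_mul, mul_ite]
    have hPO : ∀ j i, ((P * Oᵀ) j i)^2 = c i j := by
      intro j i
      have : (P * Oᵀ) j i = (O * Pᵀ) i j := by
        simp [Matrix.mul_apply, Matrix.transpose_apply, mul_comm]
      rw [this]
    have h2 : ∑ j, ∑ i, ((P * Oᵀ) j i)^2 * (id (mu j) * deriv g (lam i))
        = ∑ i, ∑ j, c i j * (mu j * deriv g (lam i)) := by
      rw [Finset.sum_comm]
      exact Finset.sum_congr rfl fun i _ => Finset.sum_congr rfl fun j _ => by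
        rw [hPO j i]; simp
    rw [h1, h2]
    have key : ∀ i ∈ Finset.univ (α := Fin d), ∀ j ∈ Finset.univ (α := Fin d),
        c i j * g (mu j) ≤ c i j * (mu j * deriv g (lam i) - lam i * deriv g (lam i) + g (lam i)) := by
      intro i _ j _
      refine mul_le_mul_of_nonneg_left ?_ (hcnn i j)
      have := tangent_le g hdiff hconc (mu j) (lam i)
      nlinarith
    have hsum := Finset.sum_le_sum fun i hi =>
      Finset.sum_le_sum (key i hi)
    have expand : ∑ i, ∑ j, c i j * (mu j * deriv g (lam i) - lam i * deriv g (lam i) + g (lam i))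
        = ∑ i, ∑ j, c i j * (mu j * deriv g (lam i))
          - ∑ i, ∑ j, c i j * (lam i * deriv g (lam i))
          + ∑ i, ∑ j, c i j * g (lam i) := by
      rw [← Finset.sum_sub_distrib, ← Finset.sum_add_distrib]
      refine Finset.sum_congr rfl fun i _ => ?_
      rw [← Finset.sum_sub_distrib, ← Finset.sum_add_distrib]
      exact Finset.sum_congr rfl fun j _ => by ring
    rw [expand, ← hgmu, ← hlamglam, ← hglam] at hsum
    linarith
end

section
/- Let g ∈ C^{0,1}(ℝ) have Lipschitz constant g_Lip. Then for all real symmetric d×d matrices φ, ψ: ‖g(φ) − g(ψ)‖ ≤ g_Lip · ‖φ − ψ‖ in the Frobenius norm, where g is applied spectrally. -/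
open Matrix BigOperators

lemma frobSq_eq_trace' {d : ℕ} (A : Matrix (Fin d) (Fin d) ℝ) :
    (∑ i, ∑ j, (A i j)^2) = Matrix.trace (Aᵀ * A) := by
  simp [Matrix.trace, Matrix.mul_apply, Matrix.diag, sq]
  exact Finset.sum_comm

lemma frobSq_conj {d : ℕ} (O P A : Matrix (Fin d) (Fin d) ℝ)
    (hO : Oᵀ * O = 1) (hP : Pᵀ * P = 1) :
    (∑ i, ∑ j, ((O * A * Pᵀ) i j)^2) = ∑ i, ∑ j, (A i j)^2 := by
  rw [frobSq_eq_trace', frobSq_eq_trace']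
  have : (O * A * Pᵀ)ᵀ * (O * A * Pᵀ) = P * (Aᵀ * A) * Pᵀ := by
    simp only [Matrix.transpose_mul, Matrix.transpose_transpose, Matrix.mul_assoc]
    rw [← Matrix.mul_assoc Oᵀ O, hO, Matrix.one_mul]
  rw [this, Matrix.trace_mul_cycle, ← Matrix.mul_assoc, hP, Matrix.one_mul]

lemma spec_conj {d : ℕ} (O P : Matrix (Fin d) (Fin d) ℝ) (lam mu : Fin d → ℝ)
    (g : ℝ → ℝ) (hO : Oᵀ * O = 1) (hP : Pᵀ * P = 1) (i j : Fin d) :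
    (O * (spec O lam g - spec P mu g) * Pᵀ) i j
      = (g (lam i) - g (mu j)) * (O * Pᵀ) i j := by
  have hO' : O * Oᵀ = 1 := mul_eq_one_comm.mp hO
  have hP' : P * Pᵀ = 1 := mul_eq_one_comm.mp hP
  have : O * (spec O lam g - spec P mu g) * Pᵀ
      = Matrix.diagonal (fun i => g (lam i)) * (O * Pᵀ)
        - (O * Pᵀ) * Matrix.diagonal (fun i => g (mu i)) := by
    simp only [spec, Matrix.mul_sub, Matrix.sub_mul]
    rw [show O * (Oᵀ * Matrix.diagonal (fun i => g (lam i)) * O) * Pᵀ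
        = (O * Oᵀ) * Matrix.diagonal (fun i => g (lam i)) * (O * Pᵀ) by
      simp [Matrix.mul_assoc]]
    rw [show O * (Pᵀ * Matrix.diagonal (fun i => g (mu i)) * P) * Pᵀ
        = (O * Pᵀ) * Matrix.diagonal (fun i => g (mu i)) * (P * Pᵀ) by
      simp [Matrix.mul_assoc]]
    rw [hO', hP', Matrix.one_mul, Matrix.mul_one]
  rw [this]
  simp [Matrix.sub_apply, Matrix.diagonal_mul, Matrix.mul_diagonal]
  ring

theorem statement2 (d : ℕ) (g : ℝ → ℝ) (L : ℝ)
    (hg : ∀ x y : ℝ, |g x - g y| ≤ L * |x - y|)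
    (O P : Matrix (Fin d) (Fin d) ℝ) (lam mu : Fin d → ℝ)
    (hO : Oᵀ * O = 1) (hP : Pᵀ * P = 1) :
    Real.sqrt (frobSq (spec O lam g - spec P mu g)) ≤
      L * Real.sqrt (frobSq (spec O lam id - spec P mu id)) := by
  have hL : 0 ≤ L := by
    have h := hg 0 1
    have h0 : (0:ℝ) ≤ L * |0 - (1:ℝ)| := le_trans (abs_nonneg _) h
    simpa using h0
  have key : ∀ h : ℝ → ℝ, frobSq (spec O lam h - spec P mu h)
      = ∑ i, ∑ j, ((h (lam i) - h (mu j)) * (O * Pᵀ) i j)^2 := by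
    intro h
    unfold frobSq
    rw [← frobSq_conj O P _ hO hP]
    congr 1; ext i; congr 1; ext j
    rw [spec_conj O P lam mu h hO hP]
  rw [key, key]
  have hsum : (∑ i, ∑ j, ((g (lam i) - g (mu j)) * (O * Pᵀ) i j)^2)
      ≤ L^2 * ∑ i, ∑ j, ((id (lam i) - id (mu j)) * (O * Pᵀ) i j)^2 := by
    rw [Finset.mul_sum]
    apply Finset.sum_le_sum
    intro i _
    rw [Finset.mul_sum]
    apply Finset.sum_le_sum
    intro j _
    have h1 : (g (lam i) - g (mu j))^2 ≤ (L * |lam i - mu j|)^2 := by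
      rw [← sq_abs]
      exact pow_le_pow_left₀ (abs_nonneg _) (hg _ _) 2
    have h2 : (L * |lam i - mu j|)^2 = L^2 * (lam i - mu j)^2 := by
      rw [mul_pow, sq_abs]
    calc ((g (lam i) - g (mu j)) * (O * Pᵀ) i j)^2
        = (g (lam i) - g (mu j))^2 * ((O * Pᵀ) i j)^2 := by ring
      _ ≤ L^2 * (lam i - mu j)^2 * ((O * Pᵀ) i j)^2 := by
          apply mul_le_mul_of_nonneg_right _ (sq_nonneg _)
          rw [← h2]; exact h1
      _ = L^2 * ((id (lam i) - id (mu j)) * (O * Pᵀ) i j)^2 := by simp; ring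
  calc Real.sqrt (∑ i, ∑ j, ((g (lam i) - g (mu j)) * (O * Pᵀ) i j)^2)
      ≤ Real.sqrt (L^2 * ∑ i, ∑ j, ((id (lam i) - id (mu j)) * (O * Pᵀ) i j)^2) :=
        Real.sqrt_le_sqrt hsum
    _ = L * Real.sqrt (∑ i, ∑ j, ((id (lam i) - id (mu j)) * (O * Pᵀ) i j)^2) := by
        rw [Real.sqrt_mul (sq_nonneg L), Real.sqrt_sq hL]
end

section
/- Let δ ∈ (0,1) and G_δ the regularized logarithm. For all real symmetric d×d matrices φ, ψ: −(φ − ψ) : (G_δ'(φ) − G_δ'(ψ)) ≥ δ² ‖G_δ'(φ) − G_δ'(ψ)‖², where ‖·‖ is the Frobenius norm and A : B = tr(AᵀB). -/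
open Matrix BigOperators

lemma entryform {d : ℕ} (A : Matrix (Fin d) (Fin d) ℝ) (a : Fin d → ℝ) (i j : Fin d) :
    (Aᵀ * Matrix.diagonal a * A) i j = ∑ k, A k i * a k * A k j := by
  rw [Matrix.mul_assoc, Matrix.mul_apply]
  congr 1; ext k
  rw [Matrix.diagonal_mul, Matrix.transpose_apply]; ring

lemma pairing {d : ℕ} (A B : Matrix (Fin d) (Fin d) ℝ) (a e : Fin d → ℝ) :
    (∑ i, ∑ j, (Aᵀ * Matrix.diagonal a * A) i j * (Bᵀ * Matrix.diagonal e * B) i j)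
      = ∑ k, ∑ l, ((A * Bᵀ) k l)^2 * (a k * e l) := by
  have step : ∀ i j : Fin d,
      (Aᵀ * Matrix.diagonal a * A) i j * (Bᵀ * Matrix.diagonal e * B) i j
        = ∑ k, ∑ l, (a k * e l) * ((A k i * B l i) * (A k j * B l j)) := by
    intro i j
    rw [entryform, entryform, Finset.sum_mul_sum]
    refine Finset.sum_congr rfl fun k _ => Finset.sum_congr rfl fun l _ => by ring
  simp only [step]
  have swap1 : ∀ i : Fin d,
      (∑ j, ∑ k, ∑ l, (a k * e l) * ((A k i * B l i) * (A k j * B l j)))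
        = ∑ k, ∑ l, ∑ j, (a k * e l) * ((A k i * B l i) * (A k j * B l j)) := by
    intro i
    rw [Finset.sum_comm]
    exact Finset.sum_congr rfl fun k _ => Finset.sum_comm
  simp only [swap1]
  rw [Finset.sum_comm]
  refine Finset.sum_congr rfl fun k _ => ?_
  rw [Finset.sum_comm]
  refine Finset.sum_congr rfl fun l _ => ?_
  have : ∑ i, ∑ j : Fin d, (a k * e l) * ((A k i * B l i) * (A k j * B l j))
      = (a k * e l) * ((∑ i, A k i * B l i) * (∑ j, A k j * B l j)) := by
    rw [Finset.sum_mul_sum]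
    simp only [Finset.mul_sum]
  rw [this]
  have hQ : (A * Bᵀ) k l = ∑ i, A k i * B l i := by
    simp [Matrix.mul_apply, Matrix.transpose_apply]
  rw [hQ]; ring


lemma scalar (δ s t : ℝ) (hδ : 0 < δ) :
    δ ^ 2 * ((max s δ)⁻¹ - (max t δ)⁻¹) ^ 2
      ≤ -((s - t) * ((max s δ)⁻¹ - (max t δ)⁻¹)) := by
  set a := max s δ with ha_def
  set b := max t δ with hb_def
  have ha : δ ≤ a := le_max_right _ _
  have hb : δ ≤ b := le_max_right _ _
  have ha0 : 0 < a := lt_of_lt_of_le hδ ha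
  have hb0 : 0 < b := lt_of_lt_of_le hδ hb
  have hab : 0 < a * b := mul_pos ha0 hb0
  have hdiff : a⁻¹ - b⁻¹ = (b - a) / (a * b) := by
    field_simp
  have key : (a - b) ^ 2 ≤ (s - t) * (a - b) := by
    rcases le_total s δ with h | h <;> rcases le_total t δ with h' | h' <;>
      simp only [ha_def, hb_def, max_eq_right, max_eq_left, h, h'] <;> nlinarith
  have hδ2 : δ ^ 2 ≤ a * b := by nlinarith
  rw [hdiff]
  have e1 : δ ^ 2 * ((b - a) / (a * b)) ^ 2 = δ ^ 2 * (a - b) ^ 2 / (a * b) ^ 2 := by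
    rw [div_pow]; ring
  have e2 : -((s - t) * ((b - a) / (a * b))) = (s - t) * (a - b) / (a * b) := by
    ring
  rw [e1, e2, div_le_div_iff₀ (by positivity) hab]
  nlinarith [mul_le_mul_of_nonneg_right key (sq_nonneg (a*b)),
    mul_le_mul_of_nonneg_right hδ2 (mul_nonneg hab.le (sq_nonneg (a - b)))]
lemma rowsum {d : ℕ} (O P : Matrix (Fin d) (Fin d) ℝ)
    (hO : Oᵀ * O = 1) (hP : Pᵀ * P = 1) (k : Fin d) :
    ∑ l, ((O * Pᵀ) k l) ^ 2 = 1 := by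
  have hO' : O * Oᵀ = 1 := mul_eq_one_comm.mp hO
  have hP' : P * Pᵀ = 1 := mul_eq_one_comm.mp hP
  have h : (O * Pᵀ) * (O * Pᵀ)ᵀ = 1 := by
    rw [Matrix.transpose_mul, Matrix.transpose_transpose, Matrix.mul_assoc,
      ← Matrix.mul_assoc Pᵀ, hP, Matrix.one_mul, hO']
  have h2 : ((O * Pᵀ) * (O * Pᵀ)ᵀ) k k = ∑ l, ((O * Pᵀ) k l) ^ 2 := by
    simp [Matrix.mul_apply, Matrix.transpose_apply, sq, mul_comm]
  rw [h, Matrix.one_apply_eq] at h2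
  exact h2.symm

lemma colsum {d : ℕ} (O P : Matrix (Fin d) (Fin d) ℝ)
    (hO : Oᵀ * O = 1) (hP : Pᵀ * P = 1) (l : Fin d) :
    ∑ k, ((O * Pᵀ) k l) ^ 2 = 1 := by
  have hO' : O * Oᵀ = 1 := mul_eq_one_comm.mp hO
  have hP' : P * Pᵀ = 1 := mul_eq_one_comm.mp hP
  have h : (O * Pᵀ)ᵀ * (O * Pᵀ) = 1 := by
    rw [Matrix.transpose_mul, Matrix.transpose_transpose, Matrix.mul_assoc,
      ← Matrix.mul_assoc Oᵀ, hO, Matrix.one_mul, hP']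
  have h2 : ((O * Pᵀ)ᵀ * (O * Pᵀ)) l l = ∑ k, ((O * Pᵀ) k l) ^ 2 := by
    simp [Matrix.mul_apply, Matrix.transpose_apply, sq, mul_comm]
  rw [h, Matrix.one_apply_eq] at h2
  exact h2.symm

lemma key {d : ℕ} (O P : Matrix (Fin d) (Fin d) ℝ)
    (hO : Oᵀ * O = 1) (hP : Pᵀ * P = 1) (a b c e : Fin d → ℝ) :
    (∑ i, ∑ j,
      ((Oᵀ * Matrix.diagonal a * O - Pᵀ * Matrix.diagonal b * P) i j *
       (Oᵀ * Matrix.diagonal c * O - Pᵀ * Matrix.diagonal e * P) i j))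
      = ∑ k, ∑ l, ((O * Pᵀ) k l) ^ 2 * ((a k - b l) * (c k - e l)) := by
  have hO' : O * Oᵀ = 1 := mul_eq_one_comm.mp hO
  have hP' : P * Pᵀ = 1 := mul_eq_one_comm.mp hP
  have expand : (∑ i, ∑ j,
      ((Oᵀ * Matrix.diagonal a * O - Pᵀ * Matrix.diagonal b * P) i j *
       (Oᵀ * Matrix.diagonal c * O - Pᵀ * Matrix.diagonal e * P) i j))
      = (∑ i, ∑ j, (Oᵀ * Matrix.diagonal a * O) i j * (Oᵀ * Matrix.diagonal c * O) i j)
        - (∑ i, ∑ j, (Oᵀ * Matrix.diagonal a * O) i j * (Pᵀ * Matrix.diagonal e * P) i j)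
        - (∑ i, ∑ j, (Pᵀ * Matrix.diagonal b * P) i j * (Oᵀ * Matrix.diagonal c * O) i j)
        + (∑ i, ∑ j, (Pᵀ * Matrix.diagonal b * P) i j * (Pᵀ * Matrix.diagonal e * P) i j) := by
    simp only [Matrix.sub_apply, sub_mul, mul_sub, Finset.sum_sub_distrib]
    ring
  rw [expand, pairing O O a c, pairing O P a e, pairing P O b c, pairing P P b e]
  -- diagonal terms
  have hOO : (∑ k, ∑ l, ((O * Oᵀ) k l) ^ 2 * (a k * c l)) = ∑ k, a k * c k := by
    rw [hO']
    simp [Matrix.one_apply, apply_ite (fun x : ℝ => x ^ 2), ite_mul]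
  have hPP : (∑ k, ∑ l, ((P * Pᵀ) k l) ^ 2 * (b k * e l)) = ∑ l, b l * e l := by
    rw [hP']
    simp [Matrix.one_apply, apply_ite (fun x : ℝ => x ^ 2), ite_mul]
  have hPO : (∑ k, ∑ l, ((P * Oᵀ) k l) ^ 2 * (b k * c l))
      = ∑ k, ∑ l, ((O * Pᵀ) k l) ^ 2 * (c k * b l) := by
    rw [Finset.sum_comm]
    refine Finset.sum_congr rfl fun k _ => Finset.sum_congr rfl fun l _ => ?_
    have : (P * Oᵀ) l k = (O * Pᵀ) k l := by
      rw [← Matrix.transpose_apply (O * Pᵀ), Matrix.transpose_mul, Matrix.transpose_transpose]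
    rw [this]; ring
  rw [hOO, hPP, hPO]
  have hdiag1 : (∑ k, a k * c k) = ∑ k, ∑ l, ((O * Pᵀ) k l) ^ 2 * (a k * c k) := by
    refine Finset.sum_congr rfl fun k _ => ?_
    rw [← Finset.sum_mul, rowsum O P hO hP k, one_mul]
  have hdiag2 : (∑ l, b l * e l) = ∑ k, ∑ l, ((O * Pᵀ) k l) ^ 2 * (b l * e l) := by
    rw [Finset.sum_comm]
    refine Finset.sum_congr rfl fun l _ => ?_
    rw [← Finset.sum_mul, colsum O P hO hP l, one_mul]
  rw [hdiag1, hdiag2]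
  simp only [← Finset.sum_sub_distrib, ← Finset.sum_add_distrib]
  refine Finset.sum_congr rfl fun k _ => Finset.sum_congr rfl fun l _ => by ring

theorem statement7 (δ : ℝ) (hδ : δ ∈ Set.Ioo (0:ℝ) 1) (d : ℕ)
    (O P : Matrix (Fin d) (Fin d) ℝ) (lam mu : Fin d → ℝ)
    (hO : Oᵀ * O = 1) (hP : Pᵀ * P = 1) :
    δ ^ 2 * frobSq (spec O lam (Gdelta' δ) - spec P mu (Gdelta' δ)) ≤
      -(minner (spec O lam id - spec P mu id)
        (spec O lam (Gdelta' δ) - spec P mu (Gdelta' δ))) := by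
  have h1 : frobSq (spec O lam (Gdelta' δ) - spec P mu (Gdelta' δ))
      = ∑ k, ∑ l, ((O * Pᵀ) k l) ^ 2 *
          ((Gdelta' δ (lam k) - Gdelta' δ (mu l)) * (Gdelta' δ (lam k) - Gdelta' δ (mu l))) := by
    have e : ∀ Y : Matrix (Fin d) (Fin d) ℝ, frobSq Y = ∑ i, ∑ j, Y i j * Y i j := by
      intro Y; simp [frobSq, sq]
    rw [e]
    simp only [spec]
    exact key O P hO hP _ _ _ _
  have h2 : minner (spec O lam id - spec P mu id)
        (spec O lam (Gdelta' δ) - spec P mu (Gdelta' δ))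
      = ∑ k, ∑ l, ((O * Pᵀ) k l) ^ 2 *
          ((lam k - mu l) * (Gdelta' δ (lam k) - Gdelta' δ (mu l))) := by
    simp only [minner, spec, id]
    exact key O P hO hP _ _ _ _
  rw [h1, h2, Finset.mul_sum, ← Finset.sum_neg_distrib]
  refine Finset.sum_le_sum fun k _ => ?_
  rw [Finset.mul_sum, ← Finset.sum_neg_distrib]
  refine Finset.sum_le_sum fun l _ => ?_
  have hs := scalar δ (lam k) (mu l) hδ.1
  have hq : (0:ℝ) ≤ ((O * Pᵀ) k l) ^ 2 := sq_nonneg _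
  have := mul_le_mul_of_nonneg_left hs hq
  simp only [Gdelta']
  nlinarith [this]
end

section
/- Let b > 0, δ ∈ (0,1/2], and G_δ the regularized logarithm. Then for every s ∈ ℝ: −b·G_δ(1 − s/b) − s ≥ (1/2)·max{|s| − 3b, 0}. -/
open Matrix BigOperators

lemma Gdelta_le_sub_one (δ u : ℝ) (h0 : 0 < δ) (h1 : δ ≤ 1/2) :
    Gdelta δ u ≤ u - 1 := by
  unfold Gdelta
  split_ifs with h
  · exact Real.log_le_sub_one_of_pos (lt_of_lt_of_le h0 h)
  · push_neg at h
    have hlog : Real.log δ ≤ δ - 1 := Real.log_le_sub_one_of_pos h0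
    have key : u / δ ≤ u - Real.log δ := by
      rw [div_le_iff₀ h0]
      nlinarith [mul_le_mul_of_nonneg_left hlog h0.le,
        mul_nonneg (sub_nonneg.mpr h.le) (show (0:ℝ) ≤ 1 - δ by linarith)]
    linarith

theorem statement9 (b δ : ℝ) (hb : 0 < b) (hδ : δ ∈ Set.Ioc (0:ℝ) (1/2)) (s : ℝ) :
    (1/2) * max (|s| - 3*b) 0 ≤ -b * Gdelta δ (1 - s/b) - s := by
  obtain ⟨hδ0, hδ1⟩ := hδ
  have hR0 : 0 ≤ -b * Gdelta δ (1 - s/b) - s := by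
    have := Gdelta_le_sub_one δ (1 - s/b) hδ0 hδ1
    have : -b * Gdelta δ (1 - s/b) ≥ -b * (1 - s/b - 1) := by nlinarith
    have hsb : b * (s/b) = s := by field_simp
    nlinarith
  rcases le_or_gt (|s| - 3*b) 0 with hcase | hcase
  · calc (1/2) * max (|s| - 3*b) 0 = 0 := by rw [max_eq_right hcase]; ring
      _ ≤ _ := hR0
  · rw [max_eq_left hcase.le]
    rcases le_or_gt s 0 with hs | hs
    · -- s ≤ 0, |s| = -s, t = 1 - s/b ≥ 4
      have habs : |s| = -s := abs_of_nonpos hs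
      rw [habs] at hcase ⊢
      have hsb : -s > 3*b := by linarith
      have ht4 : (4:ℝ) ≤ 1 - s/b := by
        rw [le_sub_iff_add_le]
        have : s/b ≤ -3 := by rw [div_le_iff₀ hb]; linarith
        linarith
      have htδ : δ ≤ 1 - s/b := by linarith
      rw [Gdelta, if_pos htδ]
      set t : ℝ := 1 - s/b with htdef
      clear_value t
      have ht0 : 0 < t := by linarith
      have hsqrt : Real.sqrt t ^ 2 = t := Real.sq_sqrt ht0.le
      have hsqrt0 : 0 ≤ Real.sqrt t := Real.sqrt_nonneg t
      have hlog : Real.log t ≤ 2 * (Real.sqrt t - 1) := by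
        have h1 : Real.log (Real.sqrt t) = Real.log t / 2 := Real.log_sqrt ht0.le
        have h2 : Real.log (Real.sqrt t) ≤ Real.sqrt t - 1 :=
          Real.log_le_sub_one_of_pos (Real.sqrt_pos.mpr ht0)
        linarith
      -- need: (-s - 3b)/2 ≤ -b log t - s, with t = 1 - s/b, s = b(1-t)
      have hsval : s = b * (1 - t) := by
        have hbs : b * (s/b) = s := by field_simp
        rw [htdef]; linear_combination -hbs
      -- suffices log t ≤ (t+2)/2 roughly; from hlog and 4√t ≤ t+... (√t-?)² ≥ 0
      have h4 : 4 * Real.sqrt t ≤ t + 4 := by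
        nlinarith [sq_nonneg (Real.sqrt t - 2), hsqrt]
      have key : Real.log t ≤ (t + 2) / 2 := by linarith
      nlinarith [mul_le_mul_of_nonneg_left key hb.le, hsval]
    · -- s > 0, s > 3b, t = 1 - s/b < δ
      have habs : |s| = s := abs_of_pos hs
      rw [habs] at hcase ⊢
      have hsb : s > 3*b := by linarith
      have htδ : ¬ δ ≤ 1 - s/b := by
        push_neg
        have : 3 < s/b := by rw [lt_div_iff₀ hb]; linarith
        linarith
      rw [Gdelta, if_neg htδ]
      have hlogδ : Real.log δ ≤ 0 := Real.log_nonpos hδ0.le (by linarith)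
      -- R = (s-b)(1/δ-1) - b log δ ≥ s - b ≥ (s-3b)/2
      have hδinv : (2:ℝ) ≤ 1/δ := by rw [le_div_iff₀ hδ0]; linarith
      have hexp : -b * ((1 - s/b)/δ + Real.log δ - 1) - s
          = (s - b) * (1/δ - 1) - b * Real.log δ := by
        field_simp
        ring
      rw [hexp]
      nlinarith [mul_le_mul_of_nonneg_left (show (1:ℝ) ≤ 1/δ - 1 by linarith)
        (show (0:ℝ) ≤ s - b by linarith), mul_nonneg hb.le (neg_nonneg.mpr hlogδ)]
end
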